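/- Let V be a U_q^∨-module that is a finite-dimensional 𝔽-vector space of positive dimension, and let T denote the action of y⁻¹ on V. Let V_inv = ∩_{n≥0} image(Tⁿ) and V_nil = ∪_{n≥0} kernel(Tⁿ). Then V_inv and V_nil are U_q^∨-submodules of V and V = V_inv ⊕ V_nil. In particular, if the U_q^∨-module V is indecomposable, then T is either nilpotent or invertible on V. -/

import Mathlib

namespace Paper


/-- Generators for the equitable presentation of `U_q(sl2)`: `x`, `y`, `y⁻¹`, `z`. -/
inductive EqGen : Type
  | x | y | y' | z

/-- The defining relations of the equitable presentation of `U_q(sl2)`. -/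
inductive EqRel (F : Type*) [Field F] (q : F) :
    FreeAlgebra F EqGen → FreeAlgebra F EqGen → Prop
  | yy' : EqRel F q (FreeAlgebra.ι F EqGen.y * FreeAlgebra.ι F EqGen.y') 1
  | y'y : EqRel F q (FreeAlgebra.ι F EqGen.y' * FreeAlgebra.ι F EqGen.y) 1
  | xy : EqRel F q
      (q • (FreeAlgebra.ι F EqGen.x * FreeAlgebra.ι F EqGen.y)
        - q⁻¹ • (FreeAlgebra.ι F EqGen.y * FreeAlgebra.ι F EqGen.x))
      ((q - q⁻¹) • (1 : FreeAlgebra F EqGen))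
  | yz : EqRel F q
      (q • (FreeAlgebra.ι F EqGen.y * FreeAlgebra.ι F EqGen.z)
        - q⁻¹ • (FreeAlgebra.ι F EqGen.z * FreeAlgebra.ι F EqGen.y))
      ((q - q⁻¹) • (1 : FreeAlgebra F EqGen))
  | zx : EqRel F q
      (q • (FreeAlgebra.ι F EqGen.z * FreeAlgebra.ι F EqGen.x)
        - q⁻¹ • (FreeAlgebra.ι F EqGen.x * FreeAlgebra.ι F EqGen.z))
      ((q - q⁻¹) • (1 : FreeAlgebra F EqGen))

/-- `U_q(sl2)` in its equitable presentation. -/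
abbrev Usl2 (F : Type*) [Field F] (q : F) := RingQuot (EqRel F q)

noncomputable def ux (F : Type*) [Field F] (q : F) : Usl2 F q :=
  RingQuot.mkAlgHom F (EqRel F q) (FreeAlgebra.ι F EqGen.x)

noncomputable def uy (F : Type*) [Field F] (q : F) : Usl2 F q :=
  RingQuot.mkAlgHom F (EqRel F q) (FreeAlgebra.ι F EqGen.y)

noncomputable def uy' (F : Type*) [Field F] (q : F) : Usl2 F q :=
  RingQuot.mkAlgHom F (EqRel F q) (FreeAlgebra.ι F EqGen.y')

noncomputable def uz (F : Type*) [Field F] (q : F) : Usl2 F q :=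
  RingQuot.mkAlgHom F (EqRel F q) (FreeAlgebra.ι F EqGen.z)

/-- `X = a⁻²x + (1 − a⁻²)y⁻¹`. -/
noncomputable def uX (F : Type*) [Field F] (q a : F) : Usl2 F q :=
  (a ^ 2)⁻¹ • ux F q + (1 - (a ^ 2)⁻¹) • uy' F q

/-- `Z = a²z + (1 − a²)y⁻¹`. -/
noncomputable def uZ (F : Type*) [Field F] (q a : F) : Usl2 F q :=
  a ^ 2 • uz F q + (1 - a ^ 2) • uy' F q

/-- `A = a⁻¹x + az`. -/
noncomputable def uA (F : Type*) [Field F] (q a : F) : Usl2 F q :=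
  a⁻¹ • ux F q + a • uz F q

/-- `U_q^∨`, the subalgebra of `U_q(sl2)` generated by `x`, `y⁻¹`, `z`. -/
noncomputable def Uvee (F : Type*) [Field F] (q : F) : Subalgebra F (Usl2 F q) :=
  Algebra.adjoin F {ux F q, uy' F q, uz F q}


lemma uy'_mem (F : Type*) [Field F] (q : F) : uy' F q ∈ Uvee F q :=
  Algebra.subset_adjoin (by simp)


end Paper

/-!
Write `T` for the action of `y⁻¹`. In `U_q(sl2)` the element `y⁻¹` is a unit, and the equitable
relations show that conjugation by `y` and by `y⁻¹` maps each of `x`, `y⁻¹`, `z` to a linear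
combination of `x`, `y⁻¹`, `z`. Hence both conjugations preserve `U_q^∨`, so for every `u ∈ U_q^∨`
and `n` there are `c, c' ∈ U_q^∨` with `u y⁻ⁿ = y⁻ⁿ c` and `y⁻ⁿ u = c' y⁻ⁿ`. Acting on `V`, the
first identity shows that `u` preserves `im Tⁿ` and the second that it preserves `ker Tⁿ`.
The decomposition `V = V_inv ⊕ V_nil` is the Fitting decomposition of `T`, and if `V` is
indecomposable one summand vanishes: `V_nil = 0` makes `T` injective, `V_inv = 0` makes it
nilpotent.
-/

open Set ConjAct

theorem Set.MapsTo.smul_pow {M α : Type*} [Monoid M] [MulAction M α] {g : M} {s : Set α}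
    (h : MapsTo (g • ·) s s) (n : ℕ) : MapsTo (g ^ n • ·) s s := by
  simpa only [smul_iterate] using h.iterate n

theorem Algebra.mapsTo_adjoin_smul {R A M : Type*} [CommSemiring R] [Semiring A] [Algebra R A]
    [Monoid M] [MulSemiringAction M A] [SMulCommClass M R A] (g : M) {s : Set A}
    (h : MapsTo (g • ·) s (adjoin R s)) : MapsTo (g • ·) (adjoin R s : Set A) (adjoin R s) :=
  fun _ ha ↦ adjoin_le (S := (adjoin R s).comap (MulSemiringAction.toAlgHom R A g)) h ha

section FittingInvariance

variable {R M : Type*} [CommSemiring R] [AddCommMonoid M] [Module R M] {f T : Module.End R M}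

theorem Module.End.mapsTo_iInf_range_pow (h : ∀ n : ℕ, ∃ c, f * T ^ n = T ^ n * c) :
    MapsTo f (⨅ n : ℕ, LinearMap.range (T ^ n) : Submodule R M)
      (⨅ n : ℕ, LinearMap.range (T ^ n) : Submodule R M) := by
  intro v hv
  simp only [SetLike.mem_coe, Submodule.mem_iInf] at hv ⊢
  intro n
  obtain ⟨c, hc⟩ := h n
  obtain ⟨w, rfl⟩ := hv n
  exact ⟨c w, by rw [← Module.End.mul_apply, ← hc, Module.End.mul_apply]⟩

theorem Module.End.mapsTo_iSup_ker_pow (h : ∀ n : ℕ, ∃ c, T ^ n * f = c * T ^ n) :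
    MapsTo f (⨆ n : ℕ, LinearMap.ker (T ^ n) : Submodule R M)
      (⨆ n : ℕ, LinearMap.ker (T ^ n) : Submodule R M) := by
  intro v hv
  rw [SetLike.mem_coe, ← Submodule.mem_comap]
  refine (iSup_le fun n ↦ ?_ : _ ≤ Submodule.comap f _) hv
  obtain ⟨c, hc⟩ := h n
  intro w hw
  refine Submodule.mem_iSup_of_mem n ?_
  simp only [LinearMap.mem_ker] at hw ⊢
  rw [← Module.End.mul_apply, hc, Module.End.mul_apply, hw, map_zero]

end FittingInvariance

section ConjugationInvariant

variable {R A M : Type*} [CommSemiring R] [Semiring A] [Algebra R A] [AddCommMonoid M] [Module R M]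
  {S : Subalgebra R A} (ρ : S →ₐ[R] Module.End R M) {u : Aˣ} (hu : (u : A) ∈ S)

theorem Subalgebra.mapsTo_iInf_range_pow_of_mapsTo_conj
    (hS : MapsTo (toConjAct u⁻¹ • ·) (S : Set A) S) (s : S) :
    MapsTo (ρ s) (⨅ n : ℕ, LinearMap.range (ρ ⟨u, hu⟩ ^ n) : Submodule R M)
      (⨅ n : ℕ, LinearMap.range (ρ ⟨u, hu⟩ ^ n) : Submodule R M) := by
  refine Module.End.mapsTo_iInf_range_pow fun n ↦ ⟨ρ ⟨_, hS.smul_pow n s.2⟩, ?_⟩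
  rw [← map_pow, ← map_mul, ← map_mul]
  congr 1
  ext
  simp only [Subalgebra.coe_mul, Subalgebra.coe_pow, ← map_pow, units_smul_def,
    ofConjAct_toConjAct, inv_pow, inv_inv]
  rw [← Units.val_pow_eq_pow_val, ← mul_assoc, ← mul_assoc, Units.mul_inv, one_mul]

theorem Subalgebra.mapsTo_iSup_ker_pow_of_mapsTo_conj
    (hS : MapsTo (toConjAct u • ·) (S : Set A) S) (s : S) :
    MapsTo (ρ s) (⨆ n : ℕ, LinearMap.ker (ρ ⟨u, hu⟩ ^ n) : Submodule R M)
      (⨆ n : ℕ, LinearMap.ker (ρ ⟨u, hu⟩ ^ n) : Submodule R M) := by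
  refine Module.End.mapsTo_iSup_ker_pow fun n ↦ ⟨ρ ⟨_, hS.smul_pow n s.2⟩, ?_⟩
  rw [← map_pow, ← map_mul, ← map_mul]
  congr 1
  ext
  simp only [Subalgebra.coe_mul, Subalgebra.coe_pow, ← map_pow, units_smul_def,
    ofConjAct_toConjAct]
  rw [← Units.val_pow_eq_pow_val, mul_assoc, Units.inv_mul, mul_one]

end ConjugationInvariant

theorem LinearMap.isUnit_of_iSup_ker_pow_eq_bot {K V : Type*} [Field K] [AddCommGroup V]
    [Module K V] [FiniteDimensional K V] {T : Module.End K V}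
    (h : ⨆ n : ℕ, LinearMap.ker (T ^ n) = ⊥) : IsUnit T := by
  rw [LinearMap.isUnit_iff_ker_eq_bot, ← le_bot_iff, ← h]
  exact le_iSup_of_le 1 (by rw [pow_one])

theorem LinearMap.isNilpotent_of_iInf_range_pow_eq_bot {R M : Type*} [CommRing R]
    [AddCommGroup M] [Module R M] [IsNoetherian R M] [IsArtinian R M] {T : Module.End R M}
    (h : ⨅ n : ℕ, LinearMap.range (T ^ n) = ⊥) : IsNilpotent T := by
  have htop : ⨆ n : ℕ, LinearMap.ker (T ^ n) = ⊤ := by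
    simpa [h] using (LinearMap.isCompl_iSup_ker_pow_iInf_range_pow T).sup_eq_top
  obtain ⟨n, hn⟩ := Filter.eventually_atTop.mp T.eventually_iSup_ker_pow_eq
  exact ⟨n, LinearMap.ker_eq_top.mp ((hn n le_rfl).symm.trans htop)⟩

namespace Paper

section Relations

variable {F : Type*} [Field F] {q : F}

lemma uy_mul_uy' : uy F q * uy' F q = 1 := by
  simpa [uy, uy'] using RingQuot.mkAlgHom_rel F (EqRel.yy' (F := F) (q := q))

lemma uy'_mul_uy : uy' F q * uy F q = 1 := by
  simpa [uy, uy'] using RingQuot.mkAlgHom_rel F (EqRel.y'y (F := F) (q := q))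

lemma xy_relation : q • (ux F q * uy F q) - q⁻¹ • (uy F q * ux F q) = (q - q⁻¹) • 1 := by
  simpa [ux, uy] using RingQuot.mkAlgHom_rel F (EqRel.xy (F := F) (q := q))

lemma yz_relation : q • (uy F q * uz F q) - q⁻¹ • (uz F q * uy F q) = (q - q⁻¹) • 1 := by
  simpa [uy, uz] using RingQuot.mkAlgHom_rel F (EqRel.yz (F := F) (q := q))

lemma uy_mul_ux_mul_uy' (hq0 : q ≠ 0) :
    uy F q * ux F q * uy' F q = q ^ 2 • ux F q + (1 - q ^ 2) • uy' F q := by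
  have h := congrArg (· * uy' F q) (xy_relation (F := F) (q := q))
  simp only [sub_mul, smul_mul_assoc, mul_assoc, uy_mul_uy', mul_one, one_mul] at h ⊢
  linear_combination (norm := match_scalars) (-q) • h <;> field_simp <;> ring

lemma uy'_mul_ux_mul_uy (hq0 : q ≠ 0) :
    uy' F q * ux F q * uy F q = (q ^ 2)⁻¹ • ux F q + (1 - (q ^ 2)⁻¹) • uy' F q := by
  have h := congrArg (uy' F q * ·) (xy_relation (F := F) (q := q))
  simp only [mul_sub, mul_smul_comm, ← mul_assoc, uy'_mul_uy, mul_one, one_mul] at h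
  linear_combination (norm := match_scalars) q⁻¹ • h <;> field_simp <;> ring

lemma uy_mul_uz_mul_uy' (hq0 : q ≠ 0) :
    uy F q * uz F q * uy' F q = (q ^ 2)⁻¹ • uz F q + (1 - (q ^ 2)⁻¹) • uy' F q := by
  have h := congrArg (· * uy' F q) (yz_relation (F := F) (q := q))
  simp only [sub_mul, smul_mul_assoc, mul_assoc, uy_mul_uy', mul_one, one_mul] at h ⊢
  linear_combination (norm := match_scalars) q⁻¹ • h <;> field_simp <;> ring

lemma uy'_mul_uz_mul_uy (hq0 : q ≠ 0) :
    uy' F q * uz F q * uy F q = q ^ 2 • uz F q + (1 - q ^ 2) • uy' F q := by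
  have h := congrArg (uy' F q * ·) (yz_relation (F := F) (q := q))
  simp only [mul_sub, mul_smul_comm, ← mul_assoc, uy'_mul_uy, mul_one, one_mul] at h
  linear_combination (norm := match_scalars) (-q) • h <;> field_simp <;> ring

end Relations

lemma ux_mem (F : Type*) [Field F] (q : F) : ux F q ∈ Uvee F q :=
  Algebra.subset_adjoin (by simp)

lemma uz_mem (F : Type*) [Field F] (q : F) : uz F q ∈ Uvee F q :=
  Algebra.subset_adjoin (by simp)

noncomputable def uy'Unit (F : Type*) [Field F] (q : F) : (Usl2 F q)ˣ :=
  ⟨uy' F q, uy F q, uy'_mul_uy, uy_mul_uy'⟩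

section Conjugation

variable {F : Type*} [Field F] {q : F}

lemma mapsTo_conj_uy'Unit_Uvee (hq0 : q ≠ 0) :
    MapsTo (toConjAct (uy'Unit F q) • ·) (Uvee F q : Set (Usl2 F q)) (Uvee F q) := by
  refine Algebra.mapsTo_adjoin_smul (R := F) _ ?_
  rintro a (rfl | rfl | rfl) <;> simp only [units_smul_def, ofConjAct_toConjAct,
    uy'Unit, Units.inv_mk]
  · rw [uy'_mul_ux_mul_uy hq0]
    exact add_mem (SMulMemClass.smul_mem _ (ux_mem F q)) (SMulMemClass.smul_mem _ (uy'_mem F q))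
  · rw [mul_assoc, uy'_mul_uy, mul_one]
    exact uy'_mem F q
  · rw [uy'_mul_uz_mul_uy hq0]
    exact add_mem (SMulMemClass.smul_mem _ (uz_mem F q)) (SMulMemClass.smul_mem _ (uy'_mem F q))

lemma mapsTo_conj_uy'Unit_inv_Uvee (hq0 : q ≠ 0) :
    MapsTo (toConjAct (uy'Unit F q)⁻¹ • ·) (Uvee F q : Set (Usl2 F q)) (Uvee F q) := by
  refine Algebra.mapsTo_adjoin_smul (R := F) _ ?_
  rintro a (rfl | rfl | rfl) <;> simp only [units_smul_def, ofConjAct_toConjAct,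
    uy'Unit, Units.inv_mk]
  · rw [uy_mul_ux_mul_uy' hq0]
    exact add_mem (SMulMemClass.smul_mem _ (ux_mem F q)) (SMulMemClass.smul_mem _ (uy'_mem F q))
  · rw [uy_mul_uy', one_mul]
    exact uy'_mem F q
  · rw [uy_mul_uz_mul_uy' hq0]
    exact add_mem (SMulMemClass.smul_mem _ (uz_mem F q)) (SMulMemClass.smul_mem _ (uy'_mem F q))

end Conjugation

theorem statement19_general (F : Type*) [Field F] (q : F) (hq0 : q ≠ 0)
    (V : Type*) [AddCommGroup V] [Module F V] [FiniteDimensional F V]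
    (ρ : Uvee F q →ₐ[F] Module.End F V)
    (T : Module.End F V) (hT : T = ρ ⟨uy' F q, uy'_mem F q⟩)
    (Vinv Vnil : Submodule F V)
    (hVinv : Vinv = ⨅ n : ℕ, LinearMap.range (T ^ n))
    (hVnil : Vnil = ⨆ n : ℕ, LinearMap.ker (T ^ n)) :
    (∀ u : Uvee F q, ∀ v ∈ Vinv, ρ u v ∈ Vinv) ∧
    (∀ u : Uvee F q, ∀ v ∈ Vnil, ρ u v ∈ Vnil) ∧
    IsCompl Vinv Vnil ∧
    ((¬ ∃ W₁ W₂ : Submodule F V,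
        (∀ u : Uvee F q, ∀ v ∈ W₁, ρ u v ∈ W₁) ∧
        (∀ u : Uvee F q, ∀ v ∈ W₂, ρ u v ∈ W₂) ∧
        W₁ ≠ ⊥ ∧ W₂ ≠ ⊥ ∧ IsCompl W₁ W₂) →
      IsNilpotent T ∨ IsUnit T) := by
  subst hT hVinv hVnil
  set T := ρ ⟨uy' F q, uy'_mem F q⟩
  have hinv := Subalgebra.mapsTo_iInf_range_pow_of_mapsTo_conj ρ (u := uy'Unit F q) (uy'_mem F q)
    (mapsTo_conj_uy'Unit_inv_Uvee hq0)
  have hnil := Subalgebra.mapsTo_iSup_ker_pow_of_mapsTo_conj ρ (u := uy'Unit F q) (uy'_mem F q)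
    (mapsTo_conj_uy'Unit_Uvee hq0)
  have hcompl := (LinearMap.isCompl_iSup_ker_pow_iInf_range_pow T).symm
  refine ⟨fun u _ hv ↦ hinv u hv, fun u _ hv ↦ hnil u hv, hcompl, fun hindec ↦ ?_⟩
  by_cases hnil_bot : ⨆ n : ℕ, LinearMap.ker (T ^ n) = ⊥
  · exact .inr (LinearMap.isUnit_of_iSup_ker_pow_eq_bot hnil_bot)
  by_cases hinv_bot : ⨅ n : ℕ, LinearMap.range (T ^ n) = ⊥
  · exact .inl (LinearMap.isNilpotent_of_iInf_range_pow_eq_bot hinv_bot)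
  exact absurd ⟨_, _, fun u _ hv ↦ hinv u hv, fun u _ hv ↦ hnil u hv, hinv_bot, hnil_bot, hcompl⟩
    hindec

/-- **Lemma 11.15 and Corollary 11.16.** Let `V` be a finite-dimensional
`U_q^∨`-module of positive dimension (given by `ρ : U_q^∨ → End(V)`), and let `T`
be the action of `y⁻¹` on `V`.  Set `V_inv = ⋂ₙ im(Tⁿ)` and `V_nil = ⋃ₙ ker(Tⁿ)`.
Then `V_inv` and `V_nil` are `U_q^∨`-submodules of `V`, and `V = V_inv ⊕ V_nil`.
In particular, if the `U_q^∨`-module `V` is indecomposable then `T` is either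
nilpotent or invertible. -/
theorem statement19 (F : Type*) [Field F] (q : F) (hq0 : q ≠ 0) (hq4 : q ^ 4 ≠ 1)
    (V : Type*) [AddCommGroup V] [Module F V] [FiniteDimensional F V]
    (hV : 0 < Module.finrank F V)
    (ρ : Uvee F q →ₐ[F] Module.End F V)
    (T : Module.End F V) (hT : T = ρ ⟨uy' F q, uy'_mem F q⟩)
    (Vinv Vnil : Submodule F V)
    (hVinv : Vinv = ⨅ n : ℕ, LinearMap.range (T ^ n))
    (hVnil : Vnil = ⨆ n : ℕ, LinearMap.ker (T ^ n)) :
    (∀ u : Uvee F q, ∀ v ∈ Vinv, ρ u v ∈ Vinv) ∧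
    (∀ u : Uvee F q, ∀ v ∈ Vnil, ρ u v ∈ Vnil) ∧
    IsCompl Vinv Vnil ∧
    ((¬ ∃ W₁ W₂ : Submodule F V,
        (∀ u : Uvee F q, ∀ v ∈ W₁, ρ u v ∈ W₁) ∧
        (∀ u : Uvee F q, ∀ v ∈ W₂, ρ u v ∈ W₂) ∧
        W₁ ≠ ⊥ ∧ W₂ ≠ ⊥ ∧ IsCompl W₁ W₂) →
      IsNilpotent T ∨ IsUnit T) :=
  statement19_general F q hq0 V ρ T hT Vinv Vnil hVinv hVnil

end Paper
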